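/- Suppose data points y_1, ..., y_N in R^D are drawn from a union of independent subspaces S_1, ..., S_n, and y_j ∈ S_i. If c ∈ R^N satisfies y_j = Σ_{l≠j} c_l y_l and c is the least-squares (minimum-norm exact) solution restricted to a support set A, then setting to zero all coefficients c_l with y_l ∉ S_i still yields an exact representation: y_j = Σ_{l: y_l ∈ S_i, l≠j} c_l y_l. -/

import Mathlib

/-!
If the dimensions add up, rank–nullity makes the summation map `⨁ i, S i → ⨆ i, S i`
injective, i.e. the subspaces are independent. Splitting the representation of `y j` into the
terms lying in `S i` and the others, the latter sum equals `y j` minus an element of `S i`, so it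
lies in `S i ⊓ ⨆ k ≠ i, S k = ⊥`.
-/

open Module
open scoped Classical

theorem iSupIndep_of_finrank_iSup_eq_sum {ι K V : Type*} [Fintype ι] [DecidableEq ι]
    [DivisionRing K] [AddCommGroup V] [Module K V] [FiniteDimensional K V]
    {S : ι → Submodule K V} (h : finrank K ↥(⨆ i, S i) = ∑ i, finrank K (S i)) :
    iSupIndep S := by
  set f : (Π₀ i, S i) →ₗ[K] V := DFinsupp.lsum ℕ fun i => (S i).subtype
  apply iSupIndep_of_dfinsupp_lsum_injective
  have hdom : finrank K (Π₀ i, S i) = ∑ i, finrank K (S i) := finrank_directSum K _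
  have hker : finrank K (LinearMap.ker f) = 0 := by
    have := f.finrank_range_add_finrank_ker
    rw [← Submodule.iSup_eq_range_dfinsupp_lsum, h, hdom] at this
    omega
  exact LinearMap.ker_eq_bot.mp (Submodule.finrank_eq_zero.mp hker)

theorem iSupIndep.sum_smul_eq_sum_filter_mem {ι κ R V : Type*} [Ring R] [AddCommGroup V]
    [Module R V] {S : ι → Submodule R V} (hS : iSupIndep S) {y : κ → V}
    (hy : ∀ l, ∃ k, y l ∈ S k) {i : ι} {x : V} (hx : x ∈ S i) {s : Finset κ} {c : κ → R}
    (hxs : x = ∑ l ∈ s, c l • y l) [DecidablePred (y · ∈ S i)] :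
    x = ∑ l ∈ s with y l ∈ S i, c l • y l := by
  set u := ∑ l ∈ s with y l ∈ S i, c l • y l
  set v := ∑ l ∈ s with y l ∉ S i, c l • y l
  have hsplit : x = u + v := hxs.trans (Finset.sum_filter_add_sum_filter_not _ _ _).symm
  have hu : u ∈ S i :=
    Submodule.sum_mem _ fun l hl => (S i).smul_mem _ (Finset.mem_filter.mp hl).2
  have hv_rest : v ∈ ⨆ k, ⨆ (_ : k ≠ i), S k := by
    refine Submodule.sum_mem _ fun l hl => Submodule.smul_mem _ _ ?_
    obtain ⟨k, hk⟩ := hy l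
    have hki : k ≠ i := by rintro rfl; exact (Finset.mem_filter.mp hl).2 hk
    exact le_biSup S hki hk
  have hv_Si : v ∈ S i := by
    rw [eq_sub_of_add_eq' hsplit.symm]
    exact sub_mem hx hu
  have hv : v = 0 := Submodule.disjoint_def.mp (hS i) v hv_Si hv_rest
  rw [hsplit, hv, add_zero]

/-- Data points `y 1, ..., y N` in `ℝ^D` drawn from a union of independent subspaces
`S 1, ..., S n`, with `y j ∈ S i`.  If `c` gives an exact representation
`y j = ∑_{l ≠ j} c l • y l`, then zeroing out all coefficients of points not in `S i`
still yields an exact representation of `y j`. -/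
theorem stmt2 {D N n : ℕ} (S : Fin n → Submodule ℝ (EuclideanSpace ℝ (Fin D)))
    (hdim : finrank ℝ (↥(⨆ i, S i)) = ∑ i, finrank ℝ (↥(S i)))
    (y : Fin N → EuclideanSpace ℝ (Fin D))
    (hunion : ∀ l, ∃ i, y l ∈ S i)
    (j : Fin N) (i : Fin n) (hyj : y j ∈ S i)
    (c : Fin N → ℝ)
    (hrep : y j = ∑ l, if l ≠ j then c l • y l else 0) :
    y j = ∑ l, if l ≠ j ∧ y l ∈ S i then c l • y l else 0 := by
  rw [← Finset.sum_filter] at hrep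
  rw [← Finset.sum_filter, ← Finset.filter_filter]
  exact (iSupIndep_of_finrank_iSup_eq_sum hdim).sum_smul_eq_sum_filter_mem hunion hyj hrep
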